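/- arXiv:1004.0742 — 5 statements merged into one kernel-verified Lean document; each statement's English description precedes it below -/
import Mathlib

section
/- Let A and B be commutative rings equipped with submultiplicative norms |·|_A and |·|_B, and let φ : A → B be an injective ring homomorphism with |φ(a)|_B = |a|_A for all a ∈ A. Suppose φ(A) admits an orthogonal complement in B, i.e., there exists an additive subgroup C of B, stable under multiplication by φ(A), such that every b ∈ B can be written uniquely as b = φ(a) + c with a ∈ A, c ∈ C, and |φ(a) + c|_B = max(|φ(a)|_B, |c|_B) for all a ∈ A, c ∈ C. Then for every multiplicative seminorm α on A bounded above by |·|_A there exists a multiplicative seminorm β on B bounded above by |·|_B with β ∘ φ = α. -/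
/-!
Call a nonarchimedean ring seminorm `μ` on `B` a multiplicative extension of `α` if `μ ∘ φ = α`
and every `φ a` is multiplicative for `μ`. Such seminorms are stable under infima of chains, under
the smoothing `x ↦ lim μ (x ^ n) ^ (1 / n)` and under `x ↦ lim μ (x * c ^ n) / μ c ^ n`, because
each `φ a` stays multiplicative. A minimal one (Zorn) is therefore equal to its smoothing, hence
power-multiplicative, and then equal to each `x ↦ lim μ (x * c ^ n) / μ c ^ n`, hence
multiplicative.

A first extension below `νB` comes from the tensor seminorm
`b ↦ inf {max α aᵢ * νB bᵢ : b = ∑ φ aᵢ * bᵢ}`. The projection `π : B → A` along `C` is `A`-linear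
and, by orthogonality, does not increase norms, so the tensor seminorm is at least `α ∘ π` and
hence equals `α` on `φ(A)`. Replacing `γ b` by `inf_a γ (φ a * b) / α a` then turns the
inequality `γ (φ a * y) ≤ α a * γ y` into an equality.
-/

open scoped NNReal

/-- A multiplicative (nonarchimedean) seminorm on a commutative ring. -/
def IsMultSeminorm {A : Type*} [CommRing A] (α : A → ℝ≥0) : Prop :=
  α 0 = 0 ∧ (∀ g h : A, α (g - h) ≤ max (α g) (α h)) ∧
    α 1 = 1 ∧ ∀ g h : A, α (g * h) = α g * α h

/-- A submultiplicative (nonarchimedean) norm on a commutative ring. -/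
def IsSubmultNorm {A : Type*} [CommRing A] (ν : A → ℝ≥0) : Prop :=
  (∀ g : A, ν g = 0 ↔ g = 0) ∧ (∀ g h : A, ν (g - h) ≤ max (ν g) (ν h)) ∧
    ν 1 = 1 ∧ ∀ g h : A, ν (g * h) ≤ ν g * ν h

theorem le_ciInf_max_ciInf {α ι ι' : Type*} [ConditionallyCompleteLinearOrder α] [Nonempty ι]
    [Nonempty ι'] {a : α} {g : ι → α} {h : ι' → α} (H : ∀ i j, a ≤ max (g i) (h j)) :
    a ≤ max (iInf g) (iInf h) := by
  by_contra! hlt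
  obtain ⟨i, hi⟩ := exists_lt_of_ciInf_lt ((le_max_left _ _).trans_lt hlt)
  obtain ⟨j, hj⟩ := exists_lt_of_ciInf_lt ((le_max_right _ _).trans_lt hlt)
  exact (H i j).not_gt (max_lt hi hj)

theorem Real.le_ciInf_mul_ciInf_of_nonneg {ι ι' : Type*} [Nonempty ι] [Nonempty ι'] {a : ℝ}
    {g : ι → ℝ} {h : ι' → ℝ} (hg : ∀ i, 0 ≤ g i) (hh : ∀ j, 0 ≤ h j)
    (H : ∀ i j, a ≤ g i * h j) : a ≤ iInf g * iInf h := by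
  rw [Real.iInf_mul_of_nonneg (Real.iInf_nonneg hh)]
  exact le_ciInf fun i => by
    rw [Real.mul_iInf_of_nonneg (hg i)]
    exact le_ciInf (H i)

theorem Multiset.sum_map_product_mul {ι κ R : Type*} [NonUnitalNonAssocSemiring R]
    (s : Multiset ι) (t : Multiset κ) (f : ι → R) (g : κ → R) :
    ((s ×ˢ t).map fun p => f p.1 * g p.2).sum = (s.map f).sum * (t.map g).sum := by
  induction s using Multiset.induction_on with
  | empty => simp
  | cons a s ih => simp [Multiset.cons_product, ih, add_mul, Multiset.sum_map_mul_left]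

section NNRealValued

variable {G : Type*} {f : G → ℝ≥0}

theorem apply_neg_eq_of_sub_le_max [AddGroup G] (h0 : f 0 = 0)
    (h : ∀ x y, f (x - y) ≤ max (f x) (f y)) (x : G) : f (-x) = f x := by
  have key : ∀ x, f (-x) ≤ f x := fun x => by simpa [h0] using h 0 x
  exact le_antisymm (key x) (by simpa using key (-x))

theorem isNonarchimedean_of_sub_le_max [AddGroup G] (h0 : f 0 = 0)
    (h : ∀ x y, f (x - y) ≤ max (f x) (f y)) : IsNonarchimedean f := fun x y => by
  simpa [apply_neg_eq_of_sub_le_max h0 h] using h x (-y)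

theorem IsNonarchimedean.apply_multiset_sum_le_sup [AddCommMonoid G] (hf : IsNonarchimedean f)
    (h0 : f 0 = 0) {ι : Type*} (g : ι → G) (s : Multiset ι) :
    f (s.map g).sum ≤ (s.map fun i => f (g i)).sup := by
  induction s using Multiset.induction_on with
  | empty => simp [h0]
  | cons a s ih => simpa using (hf _ _).trans (max_le_max le_rfl ih)

end NNRealValued

namespace RingSeminorm

variable {R : Type*} [CommRing R]

instance : PartialOrder (RingSeminorm R) :=
  PartialOrder.lift (fun μ : RingSeminorm R => (μ : R → ℝ)) DFunLike.coe_injective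

theorem bddBelow_range_apply {ι : Type*} (μ : ι → RingSeminorm R) (x : R) :
    BddBelow (Set.range fun i => μ i x) :=
  ⟨0, Set.forall_mem_range.2 fun i => apply_nonneg (μ i) x⟩

noncomputable def iInfOfDirected {ι : Type*} [Nonempty ι] (μ : ι → RingSeminorm R)
    (hμ : Directed (· ≥ ·) μ) : RingSeminorm R where
  toFun x := ⨅ i, μ i x
  map_zero' := by simp
  add_le' x y := le_ciInf_add_ciInf fun i j => by
    obtain ⟨k, hki, hkj⟩ := hμ i j
    exact (ciInf_le (bddBelow_range_apply μ _) k).trans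
      ((map_add_le_add (μ k) x y).trans (add_le_add (hki x) (hkj y)))
  neg' x := by simp
  mul_le' x y := Real.le_ciInf_mul_ciInf_of_nonneg (fun i => apply_nonneg _ _)
      (fun i => apply_nonneg _ _) fun i j => by
    obtain ⟨k, hki, hkj⟩ := hμ i j
    exact (ciInf_le (bddBelow_range_apply μ _) k).trans ((map_mul_le_mul (μ k) x y).trans
      (mul_le_mul (hki x) (hkj y) (apply_nonneg _ _) (apply_nonneg _ _)))

variable {ι : Type*} [Nonempty ι] {μ : ι → RingSeminorm R} {hμ : Directed (· ≥ ·) μ}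

theorem iInfOfDirected_apply (x : R) : iInfOfDirected μ hμ x = ⨅ i, μ i x := rfl

theorem iInfOfDirected_le (i : ι) : iInfOfDirected μ hμ ≤ μ i :=
  fun x => ciInf_le (bddBelow_range_apply μ x) i

theorem isNonarchimedean_iInfOfDirected (h : ∀ i, IsNonarchimedean (μ i)) :
    IsNonarchimedean (iInfOfDirected μ hμ) := fun x y =>
  le_ciInf_max_ciInf fun i j => by
    obtain ⟨k, hki, hkj⟩ := hμ i j
    exact (ciInf_le (bddBelow_range_apply μ _) k).trans
      ((h k x y).trans (max_le_max (hki x) (hkj y)))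

noncomputable def ofIsNonarchimedean (f : R → ℝ≥0)
    (h0 : f 0 = 0) (hna : IsNonarchimedean f) (hneg : ∀ x, f (-x) = f x)
    (hmul : ∀ x y, f (x * y) ≤ f x * f y) : RingSeminorm R where
  toFun x := f x
  map_zero' := by simp [h0]
  add_le' x y := by exact_mod_cast (hna x y).trans (max_le le_self_add le_add_self)
  neg' x := by simp [hneg]
  mul_le' x y := by exact_mod_cast hmul x y

theorem isMultSeminorm_toNNReal {μ : RingSeminorm R}
    (hna : IsNonarchimedean μ) (h1 : μ 1 = 1) (hmul : ∀ x y, μ (x * y) = μ x * μ y) :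
    IsMultSeminorm fun x => (μ x).toNNReal := by
  refine ⟨by simp, fun x y => ?_, by simp [h1], fun x y => ?_⟩
  · rw [← Real.toNNReal_monotone.map_max, sub_eq_add_neg, ← map_neg_eq_map μ y]
    exact Real.toNNReal_le_toNNReal (hna x (-y))
  · simp only [hmul, Real.toNNReal_mul (apply_nonneg μ x)]

end RingSeminorm

open RingSeminorm

section MulExtension

variable {A B : Type*} [CommRing A] [CommRing B] {φ : A →+* B} {α : A → ℝ≥0}

structure IsMulExtension (φ : A →+* B) (α : A → ℝ≥0) (μ : RingSeminorm B) : Prop where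
  isNonarchimedean : IsNonarchimedean μ
  apply_map : ∀ a, μ (φ a) = α a
  map_mul : ∀ a y, μ (φ a * y) = μ (φ a) * μ y

namespace IsMulExtension

variable {μ : RingSeminorm B}

theorem map_one_le_one (h : IsMulExtension φ α μ) (hα1 : α 1 = 1) : μ 1 ≤ 1 := by
  simpa [hα1] using (h.apply_map 1).le

theorem smoothingSeminorm (h : IsMulExtension φ α μ) (hα1 : α 1 = 1) :
    IsMulExtension φ α (smoothingSeminorm μ (h.map_one_le_one hα1) h.isNonarchimedean) where
  isNonarchimedean := isNonarchimedean_smoothingFun μ (h.map_one_le_one hα1) h.isNonarchimedean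
  apply_map a := by
    rw [smoothingSeminorm_apply_of_map_mul_eq_mul μ (h.map_one_le_one hα1) h.isNonarchimedean
      (h.map_mul a), h.apply_map]
  map_mul a := smoothingSeminorm_of_mul _ _ _ (h.map_mul a)

theorem seminormFromConst (h : IsMulExtension φ α μ) (hα1 : α 1 = 1) {c : B} (hc : μ c ≠ 0)
    (hpm : IsPowMul μ) :
    IsMulExtension φ α (seminormFromConst (h.map_one_le_one hα1) hc hpm) where
  isNonarchimedean :=
    seminormFromConst_isNonarchimedean (h.map_one_le_one hα1) hc hpm h.isNonarchimedean
  apply_map a :=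
    (seminormFromConst_apply_of_isMul (h.map_one_le_one hα1) hc hpm (h.map_mul a)).trans
      (h.apply_map a)
  map_mul a := seminormFromConst_isMul_of_isMul (h.map_one_le_one hα1) hc hpm (h.map_mul a)

theorem iInfOfDirected {ι : Type*} [Nonempty ι] {μ : ι → RingSeminorm B}
    (hμ : Directed (· ≥ ·) μ) (h : ∀ i, IsMulExtension φ α (μ i)) :
    IsMulExtension φ α (iInfOfDirected μ hμ) where
  isNonarchimedean := isNonarchimedean_iInfOfDirected fun i => (h i).isNonarchimedean
  apply_map a := by simp [iInfOfDirected_apply, (h _).apply_map]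
  map_mul a y := by
    simp only [iInfOfDirected_apply, (h _).map_mul, (h _).apply_map, ciInf_const]
    exact (Real.mul_iInf_of_nonneg (NNReal.coe_nonneg _) _).symm

theorem exists_minimal_le (h : IsMulExtension φ α μ) :
    ∃ ν ≤ μ, Minimal (IsMulExtension φ α) ν := by
  have hchains : ∀ c : Set (RingSeminorm B)ᵒᵈ, c ⊆ {ν | IsMulExtension φ α ν.ofDual} →
      IsChain (· ≤ ·) c → ∀ ν ∈ c, ∃ ub ∈ {ν | IsMulExtension φ α ν.ofDual}, ∀ ν ∈ c, ν ≤ ub := by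
    intro c hc hchain ν hν
    have : Nonempty c := ⟨⟨ν, hν⟩⟩
    have hdir : Directed (· ≥ ·) fun ν : c => OrderDual.ofDual ν.1 :=
      hchain.directedOn.directed_val
    exact ⟨OrderDual.toDual (RingSeminorm.iInfOfDirected _ hdir),
      IsMulExtension.iInfOfDirected hdir fun ν => hc ν.2,
      fun ν hν => RingSeminorm.iInfOfDirected_le (hμ := hdir) (⟨ν, hν⟩ : c)⟩
  obtain ⟨ν, hνμ, hν⟩ := zorn_le_nonempty₀ _ hchains (OrderDual.toDual μ) h
  exact ⟨OrderDual.ofDual ν, hνμ, hν⟩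

theorem isPowMul_of_minimal (h : Minimal (IsMulExtension φ α) μ) (hα1 : α 1 = 1) :
    IsPowMul μ := by
  have hsm : _root_.smoothingSeminorm μ (h.prop.map_one_le_one hα1) h.prop.isNonarchimedean = μ :=
    h.eq_of_le (h.prop.smoothingSeminorm hα1) (smoothingFun_le_self μ)
  rw [← hsm]
  exact isPowMul_smoothingFun μ (h.prop.map_one_le_one hα1)

theorem map_mul_of_minimal (h : Minimal (IsMulExtension φ α) μ) (hα1 : α 1 = 1) (x y : B) :
    μ (x * y) = μ x * μ y := by
  by_cases hx : μ x = 0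
  · rw [hx, zero_mul]
    exact le_antisymm ((map_mul_le_mul μ x y).trans (by rw [hx, zero_mul])) (apply_nonneg μ _)
  have hpm := isPowMul_of_minimal h hα1
  have hfc : seminormFromConst' x μ = μ := congrArg DFunLike.coe <|
    h.eq_of_le (h.prop.seminormFromConst hα1 hx hpm)
      (seminormFromConst_le_seminorm (h.prop.map_one_le_one hα1) hx hpm)
  simpa only [hfc] using seminormFromConst_const_mul (h.prop.map_one_le_one hα1) hx hpm y

theorem ofIsNonarchimedean {f : B → ℝ≥0} {h0 : f 0 = 0} {hna : IsNonarchimedean f}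
    {hneg : ∀ x, f (-x) = f x} {hmul : ∀ x y, f (x * y) ≤ f x * f y}
    (hφ : ∀ a, f (φ a) = α a) (hφmul : ∀ a y, f (φ a * y) = α a * f y) :
    IsMulExtension φ α (ofIsNonarchimedean f h0 hna hneg hmul) where
  isNonarchimedean x y := by exact_mod_cast hna x y
  apply_map a := congrArg NNReal.toReal (hφ a)
  map_mul a y := by
    change (f (φ a * y) : ℝ) = f (φ a) * f y
    rw [hφmul, hφ, NNReal.coe_mul]

theorem exists_le_map_mul (h : IsMulExtension φ α μ) (hα1 : α 1 = 1) :
    ∃ ν ≤ μ, IsMulExtension φ α ν ∧ ∀ x y, ν (x * y) = ν x * ν y := by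
  obtain ⟨ν, hνμ, hν⟩ := h.exists_minimal_le
  exact ⟨ν, hνμ, hν.prop, map_mul_of_minimal hν hα1⟩

end IsMulExtension

end MulExtension

section TensorValue

variable {A B : Type*} (α : A → ℝ≥0) (ν : B → ℝ≥0)

/- A multiset `s` of pairs `(aᵢ, bᵢ)` stands for the tensor `∑ aᵢ ⊗ bᵢ`; `tensorSeminorm` below is
the quotient, along `a ⊗ b ↦ φ a * b`, of the nonarchimedean projective tensor seminorm of `α` and
`ν`. -/
def tensorValue (s : Multiset (A × B)) : ℝ≥0 := (s.map fun p => α p.1 * ν p.2).sup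

variable {α ν} {s : Multiset (A × B)}

theorem tensorValue_le_iff {r : ℝ≥0} : tensorValue α ν s ≤ r ↔ ∀ p ∈ s, α p.1 * ν p.2 ≤ r := by
  simp only [tensorValue, Multiset.sup_le, Multiset.forall_mem_map_iff]

theorem le_tensorValue {p : A × B} (hp : p ∈ s) : α p.1 * ν p.2 ≤ tensorValue α ν s :=
  tensorValue_le_iff.1 le_rfl p hp

end TensorValue

section TensorSeminorm

variable {A B : Type*} [CommRing A] [CommRing B] (φ : A →+* B) (α : A → ℝ≥0) (ν : B → ℝ≥0)

def tensorEval (s : Multiset (A × B)) : B := (s.map fun p => φ p.1 * p.2).sum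

def TensorRepr (b : B) : Type _ := {s : Multiset (A × B) // tensorEval φ s = b}

instance (b : B) : Nonempty (TensorRepr φ b) := ⟨⟨{(1, b)}, by simp [tensorEval]⟩⟩

noncomputable def tensorSeminorm (b : B) : ℝ≥0 := ⨅ s : TensorRepr φ b, tensorValue α ν s.1

variable {φ α ν}

theorem le_tensorSeminorm {b : B} {r : ℝ≥0}
    (h : ∀ s, tensorEval φ s = b → r ≤ tensorValue α ν s) : r ≤ tensorSeminorm φ α ν b :=
  le_ciInf fun s => h s.1 s.2

theorem tensorSeminorm_le {b : B} (s : Multiset (A × B)) (hs : tensorEval φ s = b) :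
    tensorSeminorm φ α ν b ≤ tensorValue α ν s :=
  ciInf_le (OrderBot.bddBelow _) (⟨s, hs⟩ : TensorRepr φ b)

theorem tensorSeminorm_zero : tensorSeminorm φ α ν 0 = 0 :=
  le_antisymm ((tensorSeminorm_le 0 (by simp [tensorEval])).trans_eq (by simp [tensorValue]))
    zero_le

theorem tensorSeminorm_le_apply (hα1 : α 1 = 1) (b : B) : tensorSeminorm φ α ν b ≤ ν b :=
  (tensorSeminorm_le {(1, b)} (by simp [tensorEval])).trans_eq (by simp [tensorValue, hα1])

theorem tensorSeminorm_map_le (hν1 : ν 1 ≤ 1) (a : A) : tensorSeminorm φ α ν (φ a) ≤ α a :=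
  (tensorSeminorm_le {(a, 1)} (by simp [tensorEval])).trans
    (by simpa [tensorValue] using mul_le_of_le_one_right' hν1)

theorem isNonarchimedean_tensorSeminorm : IsNonarchimedean (tensorSeminorm φ α ν) :=
  fun x y => le_ciInf_max_ciInf fun s t =>
    (tensorSeminorm_le (s.1 + t.1) (by simp [tensorEval, ← s.2, ← t.2])).trans_eq
      (by simp [tensorValue, Multiset.sup_add])

theorem tensorSeminorm_neg (hν : ∀ b, ν (-b) = ν b) (x : B) :
    tensorSeminorm φ α ν (-x) = tensorSeminorm φ α ν x := by
  have key : ∀ x : B, tensorSeminorm φ α ν (-x) ≤ tensorSeminorm φ α ν x := fun x =>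
    le_tensorSeminorm fun s hs => (tensorSeminorm_le (s.map fun p => (p.1, -p.2))
      (by simp [tensorEval, Multiset.sum_map_neg, ← hs])).trans_eq
      (by simp [tensorValue, hν])
  exact le_antisymm (key x) (by simpa using key (-x))

theorem tensorSeminorm_mul_le (hαm : ∀ a a', α (a * a') = α a * α a')
    (hνm : ∀ b b', ν (b * b') ≤ ν b * ν b') (x y : B) :
    tensorSeminorm φ α ν (x * y) ≤ tensorSeminorm φ α ν x * tensorSeminorm φ α ν y := by
  refine NNReal.le_iInf_mul fun s => NNReal.le_mul_iInf fun t => ?_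
  refine (tensorSeminorm_le ((s.1 ×ˢ t.1).map fun pq => (pq.1.1 * pq.2.1, pq.1.2 * pq.2.2))
    ?_).trans (tensorValue_le_iff.2 ?_)
  · simpa [tensorEval, mul_mul_mul_comm, ← s.2, ← t.2] using
      Multiset.sum_map_product_mul s.1 t.1 (fun p => φ p.1 * p.2) (fun p => φ p.1 * p.2)
  · simp only [Multiset.mem_map, Multiset.mem_product]
    rintro _ ⟨⟨p, q⟩, ⟨hp, hq⟩, rfl⟩
    calc α (p.1 * q.1) * ν (p.2 * q.2) ≤ (α p.1 * ν p.2) * (α q.1 * ν q.2) := by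
          rw [hαm, mul_mul_mul_comm]; exact mul_le_mul_right (hνm _ _) _
      _ ≤ _ := mul_le_mul' (le_tensorValue hp) (le_tensorValue hq)

theorem tensorSeminorm_map_mul_le (hαm : ∀ a a', α (a * a') = α a * α a') (a : A) (y : B) :
    tensorSeminorm φ α ν (φ a * y) ≤ α a * tensorSeminorm φ α ν y := by
  refine NNReal.le_mul_iInf fun s => (tensorSeminorm_le (s.1.map fun p => (a * p.1, p.2))
    ?_).trans (tensorValue_le_iff.2 ?_)
  · simp [tensorEval, mul_assoc, Multiset.sum_map_mul_left, ← s.2]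
  · simp only [Multiset.mem_map]
    rintro _ ⟨p, hp, rfl⟩
    rw [hαm, mul_assoc]
    exact mul_le_mul_right (le_tensorValue hp) _

theorem le_tensorSeminorm_of_projection (hα0 : α 0 = 0) (hα : IsNonarchimedean α)
    (hαm : ∀ a a', α (a * a') = α a * α a') (π : B →+ A)
    (hπ : ∀ a b, π (φ a * b) = a * π b) (hπν : ∀ b, α (π b) ≤ ν b) (b : B) :
    α (π b) ≤ tensorSeminorm φ α ν b := by
  refine le_tensorSeminorm fun s hs => ?_
  rw [← hs, tensorEval, map_multiset_sum, Multiset.map_map]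
  refine (hα.apply_multiset_sum_le_sup hα0 (π ∘ fun p => φ p.1 * p.2) s).trans ?_
  simp only [Function.comp_apply, hπ, hαm, Multiset.sup_le, Multiset.mem_map]
  rintro _ ⟨p, hp, rfl⟩
  exact (mul_le_mul_right (hπν p.2) _).trans (le_tensorValue hp)

end TensorSeminorm

section Homogenization

variable {A B : Type*} [CommRing A] [CommRing B] (φ : A →+* B) (α : A → ℝ≥0) (γ : B → ℝ≥0)

noncomputable def homogenization (b : B) : ℝ≥0 :=
  ⨅ a : {a : A // α a ≠ 0}, γ (φ a * b) / α a

variable {φ α γ}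

theorem homogenization_le_div {a : A} (ha : α a ≠ 0) (b : B) :
    homogenization φ α γ b ≤ γ (φ a * b) / α a :=
  ciInf_le (OrderBot.bddBelow _) (⟨a, ha⟩ : {a : A // α a ≠ 0})

theorem le_homogenization (hα1 : α 1 = 1) {b : B} {r : ℝ≥0}
    (h : ∀ a, α a ≠ 0 → r ≤ γ (φ a * b) / α a) : r ≤ homogenization φ α γ b :=
  have : Nonempty {a : A // α a ≠ 0} := ⟨⟨1, by simp [hα1]⟩⟩
  le_ciInf fun a => h a.1 a.2

theorem homogenization_le (hα1 : α 1 = 1) (b : B) : homogenization φ α γ b ≤ γ b := by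
  simpa [hα1] using homogenization_le_div (φ := φ) (α := α) (γ := γ) (a := 1) (by simp [hα1]) b

theorem div_map_mul_le_div (hαm : ∀ a a', α (a * a') = α a * α a')
    (hsub : ∀ a y, γ (φ a * y) ≤ α a * γ y) {a a' : A} (ha' : α a' ≠ 0) (b : B) :
    γ (φ (a' * a) * b) / α (a' * a) ≤ γ (φ a * b) / α a := by
  rw [map_mul, mul_assoc, hαm]
  calc γ (φ a' * (φ a * b)) / (α a' * α a) ≤ α a' * γ (φ a * b) / (α a' * α a) := by
        gcongr; exact hsub _ _
    _ = γ (φ a * b) / α a := mul_div_mul_left _ _ ha'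

theorem isNonarchimedean_homogenization (hα1 : α 1 = 1) (hαm : ∀ a a', α (a * a') = α a * α a')
    (hsub : ∀ a y, γ (φ a * y) ≤ α a * γ y) (hγ : IsNonarchimedean γ) :
    IsNonarchimedean (homogenization φ α γ) := fun x y =>
  have : Nonempty {a : A // α a ≠ 0} := ⟨⟨1, by simp [hα1]⟩⟩
  le_ciInf_max_ciInf fun a a' => calc
    homogenization φ α γ (x + y) ≤ γ (φ (a'.1 * a) * (x + y)) / α (a' * a) :=
      homogenization_le_div (by rw [hαm]; exact mul_ne_zero a'.2 a.2) _
    _ ≤ max (γ (φ (a' * a) * x) / α (a' * a)) (γ (φ (a' * a) * y) / α (a' * a)) := by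
      rw [max_div_div_right zero_le, mul_add]; gcongr; exact hγ _ _
    _ ≤ max (γ (φ a * x) / α a) (γ (φ a' * y) / α a') := by
      refine max_le_max (div_map_mul_le_div hαm hsub a'.2 x) ?_
      rw [mul_comm a'.1]; exact div_map_mul_le_div hαm hsub a.2 y

theorem homogenization_neg (hγ : ∀ x, γ (-x) = γ x) (x : B) :
    homogenization φ α γ (-x) = homogenization φ α γ x := by
  simp only [homogenization, mul_neg, hγ]

theorem homogenization_mul_le (hαm : ∀ a a', α (a * a') = α a * α a')
    (hγ : ∀ x y, γ (x * y) ≤ γ x * γ y) (hα1 : α 1 = 1) (x y : B) :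
    homogenization φ α γ (x * y) ≤ homogenization φ α γ x * homogenization φ α γ y :=
  have : Nonempty {a : A // α a ≠ 0} := ⟨⟨1, by simp [hα1]⟩⟩
  NNReal.le_iInf_mul fun a => NNReal.le_mul_iInf fun a' => calc
    homogenization φ α γ (x * y) ≤ γ (φ (a.1 * a') * (x * y)) / α (a * a') :=
      homogenization_le_div (by rw [hαm]; exact mul_ne_zero a.2 a'.2) _
    _ ≤ γ (φ a * x) * γ (φ a' * y) / (α a * α a') := by
      rw [hαm, map_mul, mul_mul_mul_comm]; gcongr; exact hγ _ _
    _ = γ (φ a * x) / α a * (γ (φ a' * y) / α a') := (div_mul_div_comm _ _ _ _).symm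

theorem homogenization_map_mul (hα1 : α 1 = 1) (hαm : ∀ a a', α (a * a') = α a * α a')
    (hsub : ∀ a y, γ (φ a * y) ≤ α a * γ y) (a : A) (y : B) :
    homogenization φ α γ (φ a * y) = α a * homogenization φ α γ y := by
  have : Nonempty {a : A // α a ≠ 0} := ⟨⟨1, by simp [hα1]⟩⟩
  refine le_antisymm ?_ ?_
  · refine NNReal.le_mul_iInf fun a' => ?_
    calc homogenization φ α γ (φ a * y) ≤ γ (φ a' * (φ a * y)) / α a' :=
          homogenization_le_div a'.2 _
      _ ≤ α a * γ (φ a' * y) / α a' := by gcongr; rw [mul_left_comm]; exact hsub _ _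
      _ = α a * (γ (φ a' * y) / α a') := mul_div_assoc _ _ _
  rcases eq_or_ne (α a) 0 with ha | ha
  · simp [ha]
  refine le_homogenization hα1 fun a' ha' => ?_
  calc α a * homogenization φ α γ y ≤ α a * (γ (φ (a' * a) * y) / α (a' * a)) := by
        gcongr; exact homogenization_le_div (by rw [hαm]; exact mul_ne_zero ha' ha) y
    _ = γ (φ a' * (φ a * y)) / α a' := by
        rw [map_mul, mul_assoc, hαm]; field_simp

theorem homogenization_map (hα1 : α 1 = 1) (hαm : ∀ a a', α (a * a') = α a * α a')
    (hγ : ∀ a, γ (φ a) = α a) (a : A) : homogenization φ α γ (φ a) = α a :=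
  le_antisymm ((homogenization_le hα1 _).trans (hγ a).le)
    (le_homogenization hα1 fun a' ha' => by rw [← map_mul, hγ, hαm, mul_div_cancel_left₀ _ ha'])

end Homogenization

section Projection

variable {A B : Type*} [CommRing A] [CommRing B] (φ : A →+* B) {C : AddSubgroup B}
  (hdec : ∀ b : B, ∃! ac : A × C, b = φ ac.1 + (ac.2 : B))

noncomputable def complementDecomposition : A × C ≃+ B :=
  AddEquiv.ofBijective (φ.toAddMonoidHom.coprod C.subtype) <|
    Function.bijective_iff_existsUnique _ |>.2 fun b => by simpa [eq_comm] using hdec b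

noncomputable def complementProjection : B →+ A :=
  (AddMonoidHom.fst A C).comp (complementDecomposition φ hdec).symm.toAddMonoidHom

variable {φ hdec}

theorem complementProjection_map_add {a : A} {c : B} (hc : c ∈ C) :
    complementProjection φ hdec (φ a + c) = a := by
  have : (complementDecomposition φ hdec) (a, ⟨c, hc⟩) = φ a + c := rfl
  simp [complementProjection, ← this]

theorem complementProjection_map (a : A) : complementProjection φ hdec (φ a) = a := by
  simpa using complementProjection_map_add (hdec := hdec) (a := a) C.zero_mem

theorem exists_map_complementProjection_add (b : B) :
    ∃ c ∈ C, φ (complementProjection φ hdec b) + c = b :=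
  ⟨_, ((complementDecomposition φ hdec).symm b).2.2,
    (complementDecomposition φ hdec).apply_symm_apply b⟩

theorem complementProjection_map_mul (hstab : ∀ a, ∀ c ∈ C, φ a * c ∈ C) (a : A) (b : B) :
    complementProjection φ hdec (φ a * b) = a * complementProjection φ hdec b := by
  obtain ⟨c, hc, hb⟩ := exists_map_complementProjection_add (hdec := hdec) b
  conv_lhs => rw [← hb, mul_add, ← map_mul]
  exact complementProjection_map_add (hstab a c hc)

theorem apply_map_complementProjection_le {ν : B → ℝ≥0}
    (horth : ∀ a, ∀ c ∈ C, ν (φ a + c) = max (ν (φ a)) (ν c)) (b : B) :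
    ν (φ (complementProjection φ hdec b)) ≤ ν b := by
  obtain ⟨c, hc, hb⟩ := exists_map_complementProjection_add (hdec := hdec) b
  conv_rhs => rw [← hb, horth _ c hc]
  exact le_max_left _ _

end Projection

theorem exists_isMulExtension_le {A B : Type*} [CommRing A] [CommRing B] {φ : A →+* B}
    {α : A → ℝ≥0} {ν : B → ℝ≥0} (hα0 : α 0 = 0) (hα : IsNonarchimedean α) (hα1 : α 1 = 1)
    (hαm : ∀ a a', α (a * a') = α a * α a') (hν1 : ν 1 ≤ 1) (hνneg : ∀ b, ν (-b) = ν b)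
    (hνm : ∀ b b', ν (b * b') ≤ ν b * ν b') (π : B →+ A) (hπ : ∀ a b, π (φ a * b) = a * π b)
    (hπφ : ∀ a, π (φ a) = a) (hπν : ∀ b, α (π b) ≤ ν b) :
    ∃ μ : RingSeminorm B, IsMulExtension φ α μ ∧ ∀ b, μ b ≤ ν b := by
  have hTφ : ∀ a, tensorSeminorm φ α ν (φ a) = α a := fun a =>
    le_antisymm (tensorSeminorm_map_le hν1 a)
      (by simpa [hπφ] using le_tensorSeminorm_of_projection hα0 hα hαm π hπ hπν (φ a))
  have hsub := tensorSeminorm_map_mul_le (φ := φ) (ν := ν) hαm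
  have hN0 : homogenization φ α (tensorSeminorm φ α ν) 0 = 0 :=
    le_antisymm ((homogenization_le hα1 0).trans_eq tensorSeminorm_zero) zero_le
  refine ⟨ofIsNonarchimedean _ hN0
    (isNonarchimedean_homogenization hα1 hαm hsub isNonarchimedean_tensorSeminorm)
    (homogenization_neg (tensorSeminorm_neg hνneg))
    (homogenization_mul_le hαm (tensorSeminorm_mul_le hαm hνm) hα1),
    .ofIsNonarchimedean (homogenization_map hα1 hαm hTφ) (homogenization_map_mul hα1 hαm hsub),
    fun b => NNReal.coe_le_coe.2 <|
      (homogenization_le hα1 b).trans (tensorSeminorm_le_apply hα1 b)⟩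

theorem mult_seminorm_extends_of_orthogonal_complement_general
    {A B : Type*} [CommRing A] [CommRing B]
    (νA : A → ℝ≥0) (νB : B → ℝ≥0)
    (hνB : IsSubmultNorm νB)
    (φ : A →+* B)
    (hiso : ∀ a : A, νB (φ a) = νA a)
    (C : AddSubgroup B)
    (hstab : ∀ (a : A), ∀ c ∈ C, φ a * c ∈ C)
    (hdec : ∀ b : B, ∃! ac : A × C, b = φ ac.1 + (ac.2 : B))
    (horth : ∀ (a : A), ∀ c ∈ C, νB (φ a + c) = max (νB (φ a)) (νB c))
    (α : A → ℝ≥0) (hα : IsMultSeminorm α) (hαb : ∀ a : A, α a ≤ νA a) :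
    ∃ β : B → ℝ≥0, IsMultSeminorm β ∧ (∀ b : B, β b ≤ νB b) ∧
      ∀ a : A, β (φ a) = α a := by
  obtain ⟨hα0, hαsub, hα1, hαm⟩ := hα
  obtain ⟨hνB0, hνBsub, hνB1, hνBm⟩ := hνB
  have hν0 : νB 0 = 0 := (hνB0 0).2 rfl
  obtain ⟨μ₀, hμ₀, hμ₀ν⟩ := exists_isMulExtension_le hα0 (isNonarchimedean_of_sub_le_max hα0 hαsub)
    hα1 hαm hνB1.le (apply_neg_eq_of_sub_le_max hν0 hνBsub) hνBm (complementProjection φ hdec)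
    (complementProjection_map_mul hstab) complementProjection_map
    fun b => (hαb _).trans ((hiso _).ge.trans (apply_map_complementProjection_le horth b))
  obtain ⟨μ, hμμ₀, hμ, hmul⟩ := hμ₀.exists_le_map_mul hα1
  refine ⟨fun b => (μ b).toNNReal, isMultSeminorm_toNNReal hμ.isNonarchimedean ?_ hmul,
    fun b => Real.toNNReal_le_iff_le_coe.2 ((hμμ₀ b).trans (hμ₀ν b)), fun a => ?_⟩
  · simpa [hα1] using hμ.apply_map 1
  · simp [hμ.apply_map]

theorem mult_seminorm_extends_of_orthogonal_complement
    {A B : Type*} [CommRing A] [CommRing B]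
    (νA : A → ℝ≥0) (νB : B → ℝ≥0)
    (hνA : IsSubmultNorm νA) (hνB : IsSubmultNorm νB)
    (φ : A →+* B) (hinj : Function.Injective φ)
    (hiso : ∀ a : A, νB (φ a) = νA a)
    (C : AddSubgroup B)
    (hstab : ∀ (a : A), ∀ c ∈ C, φ a * c ∈ C)
    (hdec : ∀ b : B, ∃! ac : A × C, b = φ ac.1 + (ac.2 : B))
    (horth : ∀ (a : A), ∀ c ∈ C, νB (φ a + c) = max (νB (φ a)) (νB c))
    (α : A → ℝ≥0) (hα : IsMultSeminorm α) (hαb : ∀ a : A, α a ≤ νA a) :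
    ∃ β : B → ℝ≥0, IsMultSeminorm β ∧ (∀ b : B, β b ≤ νB b) ∧
      ∀ a : A, β (φ a) = α a :=
  mult_seminorm_extends_of_orthogonal_complement_general νA νB hνB φ hiso C hstab hdec horth α hα
    hαb
end

section
/- Let A be a commutative ring equipped with a submultiplicative norm |·|. Then the Gel'fand spectrum ℳ(A), viewed as a subset of the product space ∏_{a ∈ A} [0, |a|] with the product (pointwise convergence) topology, is a closed, and hence compact, subspace. -/
open scoped NNReal

/-- The Gel'fand spectrum of `(A, ν)`, viewed as a subset of the product space
`∏_{a ∈ A} [0, ν a]` with the product (pointwise convergence) topology. -/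
def gelfandSpectrum {A : Type*} [CommRing A] (ν : A → ℝ≥0) :
    Set (∀ a : A, Set.Icc (0 : ℝ≥0) (ν a)) :=
  {f | IsMultSeminorm (fun a : A => (f a : ℝ≥0))}

theorem isClosed_setOf_isMultSeminorm {A : Type*} [CommRing A] :
    IsClosed {α : A → ℝ≥0 | IsMultSeminorm α} := by
  simp only [IsMultSeminorm, Set.ofPred_and, Set.ofPred_forall]
  have hev (a : A) : Continuous fun α : A → ℝ≥0 => α a := continuous_apply a
  exact (isClosed_eq (hev 0) continuous_const).inter <|
    (isClosed_iInter fun g => isClosed_iInter fun h =>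
      isClosed_le (hev (g - h)) ((hev g).max (hev h))).inter <|
    (isClosed_eq (hev 1) continuous_const).inter <|
    isClosed_iInter fun g => isClosed_iInter fun h =>
      isClosed_eq (hev (g * h)) ((hev g).mul (hev h))

theorem gelfandSpectrum_isClosed_isCompact_general
    {A : Type*} [CommRing A] (ν : A → ℝ≥0) :
    IsClosed (gelfandSpectrum ν) ∧ IsCompact (gelfandSpectrum ν) := by
  have hclosed : IsClosed (gelfandSpectrum ν) :=
    isClosed_setOf_isMultSeminorm.preimage <|
      continuous_pi fun a => continuous_subtype_val.comp (continuous_apply a)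
  -- the ambient product of compact intervals is compact by Tychonoff
  exact ⟨hclosed, hclosed.isCompact⟩

theorem gelfandSpectrum_isClosed_isCompact
    {A : Type*} [CommRing A] (ν : A → ℝ≥0) (hν : IsSubmultNorm ν) :
    IsClosed (gelfandSpectrum ν) ∧ IsCompact (gelfandSpectrum ν) :=
  gelfandSpectrum_isClosed_isCompact_general ν
end

section
/- Let R be a commutative ring equipped with a submultiplicative norm |·|, and let α be a multiplicative seminorm on R bounded above by |·|. Define the Gauss extension α_G on the polynomial ring R[T] by α_G(∑_i a_i T^i) = max_i α(a_i). Then α_G is a multiplicative seminorm on R[T], and it is bounded above by the Gauss norm on R[T] (the norm sending ∑_i a_i T^i to max_i |a_i|). -/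
open scoped NNReal

/-- The Gauss extension of a function `α : R → ℝ≥0` to the polynomial ring `R[T]`:
it sends `∑_i a_i T^i` to `max_i α (a_i)`. -/
noncomputable def gaussExtension {R : Type*} [CommRing R] (α : R → ℝ≥0)
    (f : Polynomial R) : ℝ≥0 :=
  f.support.sup fun i => α (f.coeff i)


/-! The Gauss lemma for a nonarchimedean multiplicative seminorm `α`: if `i₀`, `j₀` are the
smallest indices at which `α` attains its maximum on the coefficients of `f` and of `g`, then in
the coefficient `∑_{i+j=i₀+j₀} f_i g_j` of `f * g` the term `f_{i₀} g_{j₀}` is strictly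
dominant, so the ultrametric inequality is an equality there. -/

namespace IsMultSeminorm

variable {A : Type*} [CommRing A] {α : A → ℝ≥0}

theorem map_zero (hα : IsMultSeminorm α) : α 0 = 0 := hα.1

theorem map_sub_le (hα : IsMultSeminorm α) (g h : A) : α (g - h) ≤ max (α g) (α h) := hα.2.1 g h

theorem map_one (hα : IsMultSeminorm α) : α 1 = 1 := hα.2.2.1

theorem map_mul (hα : IsMultSeminorm α) (g h : A) : α (g * h) = α g * α h := hα.2.2.2 g h

theorem map_neg (hα : IsMultSeminorm α) (g : A) : α (-g) = α g := by
  have neg_le : ∀ x : A, α (-x) ≤ α x := fun x => by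
    simpa [hα.map_zero] using hα.map_sub_le 0 x
  exact le_antisymm (neg_le g) (by simpa using neg_le (-g))

theorem isNonarchimedean (hα : IsMultSeminorm α) : IsNonarchimedean α := fun g h => by
  simpa [hα.map_neg] using hα.map_sub_le g (-h)

end IsMultSeminorm

section GaussExtension

open Polynomial Finset.HasAntidiagonal

variable {R : Type*} [CommRing R] {α : R → ℝ≥0}

theorem le_gaussExtension (h0 : α 0 = 0) (f : R[X]) (i : ℕ) :
    α (f.coeff i) ≤ gaussExtension α f := by
  by_cases hi : i ∈ f.support
  · exact Finset.le_sup (f := fun i => α (f.coeff i)) hi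
  · simp [notMem_support_iff.mp hi, h0]

theorem gaussExtension_le_iff (h0 : α 0 = 0) {f : R[X]} {c : ℝ≥0} :
    gaussExtension α f ≤ c ↔ ∀ i, α (f.coeff i) ≤ c :=
  ⟨fun h i => (le_gaussExtension h0 f i).trans h, fun h => Finset.sup_le fun i _ => h i⟩

theorem gaussExtension_mono {β : R → ℝ≥0} (hαβ : ∀ r, α r ≤ β r) (f : R[X]) :
    gaussExtension α f ≤ gaussExtension β f :=
  Finset.sup_mono_fun fun _ _ => hαβ _

theorem gaussExtension_C (h0 : α 0 = 0) (r : R) : gaussExtension α (C r) = α r := by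
  refine le_antisymm ((gaussExtension_le_iff h0).2 fun i => ?_) ?_
  · rcases eq_or_ne i 0 with rfl | hi
    · simp
    · simp [coeff_C, hi, h0]
  · simpa using le_gaussExtension h0 (C r) 0

theorem gaussExtension_sub_le (hα : IsMultSeminorm α) (f g : R[X]) :
    gaussExtension α (f - g) ≤ max (gaussExtension α f) (gaussExtension α g) :=
  (gaussExtension_le_iff hα.map_zero).2 fun i => by
    rw [coeff_sub]
    exact (hα.map_sub_le _ _).trans
      (max_le_max (le_gaussExtension hα.map_zero f i) (le_gaussExtension hα.map_zero g i))

theorem exists_min_coeff_eq_gaussExtension (h0 : α 0 = 0) (f : R[X]) :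
    ∃ i, α (f.coeff i) = gaussExtension α f ∧ ∀ j < i, α (f.coeff j) < gaussExtension α f := by
  classical
  have hex : ∃ i, α (f.coeff i) = gaussExtension α f := by
    rcases f.support.eq_empty_or_nonempty with hf | hf
    · obtain rfl := support_eq_empty.1 hf
      exact ⟨0, by simp [gaussExtension, h0]⟩
    · obtain ⟨i, -, hi⟩ := Finset.exists_mem_eq_sup f.support hf fun i => α (f.coeff i)
      exact ⟨i, hi.symm⟩
  exact ⟨Nat.find hex, Nat.find_spec hex, fun j hj =>
    (le_gaussExtension h0 f j).lt_of_ne (Nat.find_min hex hj)⟩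

theorem gaussExtension_mul_le (hα : IsMultSeminorm α) (f g : R[X]) :
    gaussExtension α (f * g) ≤ gaussExtension α f * gaussExtension α g := by
  refine (gaussExtension_le_iff hα.map_zero).2 fun k => ?_
  obtain ⟨p, -, hp⟩ := hα.isNonarchimedean.finset_image_add_of_nonempty
    (fun p => f.coeff p.1 * g.coeff p.2) ⟨(k, 0), mem_antidiagonal.2 (add_zero k)⟩
  rw [coeff_mul]
  calc _ ≤ α (f.coeff p.1 * g.coeff p.2) := hp
    _ = α (f.coeff p.1) * α (g.coeff p.2) := hα.map_mul _ _
    _ ≤ gaussExtension α f * gaussExtension α g :=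
      mul_le_mul' (le_gaussExtension hα.map_zero f _) (le_gaussExtension hα.map_zero g _)

theorem le_gaussExtension_mul (hα : IsMultSeminorm α) (f g : R[X]) :
    gaussExtension α f * gaussExtension α g ≤ gaussExtension α (f * g) := by
  obtain ⟨i₀, hfi₀, hf_lt⟩ := exists_min_coeff_eq_gaussExtension hα.map_zero f
  obtain ⟨j₀, hgj₀, hg_lt⟩ := exists_min_coeff_eq_gaussExtension hα.map_zero g
  rcases eq_zero_or_pos (gaussExtension α f * gaussExtension α g) with h | hpos
  · exact h ▸ zero_le
  have hfpos : 0 < gaussExtension α f := pos_of_mul_pos_left hpos zero_le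
  have hgpos : 0 < gaussExtension α g := pos_of_mul_pos_right hpos zero_le
  have dominant : ∀ p ∈ antidiagonal (i₀ + j₀), p ≠ (i₀, j₀) →
      α (f.coeff p.1 * g.coeff p.2) < α (f.coeff i₀ * g.coeff j₀) := by
    rintro ⟨i, j⟩ hij hne
    rw [mem_antidiagonal] at hij
    rw [hα.map_mul, hα.map_mul, hfi₀, hgj₀]
    obtain hi | hj : i < i₀ ∨ j < j₀ := by
      by_contra! h
      exact hne (Prod.ext (by omega) (by omega))
    · exact mul_lt_mul_of_lt_of_le_of_nonneg_of_pos (hf_lt i hi)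
        (le_gaussExtension hα.map_zero g j) zero_le hgpos
    · exact mul_lt_mul_of_le_of_lt_of_nonneg_of_pos (le_gaussExtension hα.map_zero f i)
        (hg_lt j hj) zero_le hfpos
  calc gaussExtension α f * gaussExtension α g = α (f.coeff i₀ * g.coeff j₀) := by
        rw [hα.map_mul, hfi₀, hgj₀]
    _ = α ((f * g).coeff (i₀ + j₀)) := by
        rw [coeff_mul, hα.isNonarchimedean.apply_sum_eq_of_lt (fun a => (hα.map_neg a).symm)
          (k := (i₀, j₀)) (mem_antidiagonal.2 rfl) dominant]
    _ ≤ gaussExtension α (f * g) := le_gaussExtension hα.map_zero _ _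

theorem IsMultSeminorm.gaussExtension (hα : IsMultSeminorm α) :
    IsMultSeminorm (gaussExtension α) :=
  ⟨by simp [_root_.gaussExtension], gaussExtension_sub_le hα,
    by rw [← C_1, gaussExtension_C hα.map_zero, hα.map_one],
    fun f g => (gaussExtension_mul_le hα f g).antisymm (le_gaussExtension_mul hα f g)⟩

end GaussExtension

theorem gaussExtension_isMultSeminorm_general
    {R : Type*} [CommRing R] (ν : R → ℝ≥0)
    (α : R → ℝ≥0) (hα : IsMultSeminorm α) (hαb : ∀ r : R, α r ≤ ν r) :
    IsMultSeminorm (gaussExtension α) ∧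
      ∀ f : Polynomial R, gaussExtension α f ≤ gaussExtension ν f :=
  ⟨hα.gaussExtension, gaussExtension_mono hαb⟩

theorem gaussExtension_isMultSeminorm
    {R : Type*} [CommRing R] (ν : R → ℝ≥0) (hν : IsSubmultNorm ν)
    (α : R → ℝ≥0) (hα : IsMultSeminorm α) (hαb : ∀ r : R, α r ≤ ν r) :
    IsMultSeminorm (gaussExtension α) ∧
      ∀ f : Polynomial R, gaussExtension α f ≤ gaussExtension ν f :=
  gaussExtension_isMultSeminorm_general ν α hα hαb
end

section
/- Let α be a multiplicative seminorm on the ring ℤ bounded above by the trivial norm. Then either α is the trivial norm (α(n) = 1 for all n ≠ 0 and α(0) = 0), or there exist a prime number p and a real number t ∈ [0,1) such that α(p^a m) = t^a for all integers a ≥ 0 and all integers m not divisible by p (with the convention t^0 = 1), and α(0) = 0. -/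
open scoped NNReal

/-- The trivial norm on a ring: `0 ↦ 0` and every nonzero element to `1`. -/
noncomputable def trivialNorm {A : Type*} [CommRing A] (a : A) : ℝ≥0 :=
  open scoped Classical in
  if a = 0 then 0 else 1

/-!
The elements of seminorm `< 1` form an ideal (ultrametric inequality, and `α ≤ 1` for
absorption), and a prime one because `α` is multiplicative with values in `[0, 1]`.
A prime ideal of `ℤ` is either `⊥`, giving the trivial norm, or `(p)` for a prime `p`; in the
latter case every `m` prime to `p` has `α m = 1`, so `α (p ^ a * m) = α p ^ a`.
-/

theorem trivialNorm_le_one {A : Type*} [CommRing A] (a : A) : trivialNorm a ≤ 1 := by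
  unfold trivialNorm
  split <;> simp

namespace IsMultSeminorm

variable {A : Type*} [CommRing A] {α : A → ℝ≥0}

theorem map_add_le (hα : IsMultSeminorm α) (g h : A) : α (g + h) ≤ max (α g) (α h) := by
  simpa only [sub_neg_eq_add, hα.map_neg] using hα.map_sub_le g (-h)

theorem map_pow (hα : IsMultSeminorm α) (g : A) (n : ℕ) : α (g ^ n) = α g ^ n := by
  induction n with
  | zero => simpa using hα.map_one
  | succ n ih => rw [pow_succ, pow_succ, hα.map_mul, ih]

def ltOneIdeal (hα : IsMultSeminorm α) (hle : ∀ g, α g ≤ 1) : Ideal A where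
  carrier := {g | α g < 1}
  zero_mem' := by simp [hα.map_zero]
  add_mem' {g h} hg hh := (hα.map_add_le g h).trans_lt (max_lt hg hh)
  smul_mem' c g hg := by
    change α (c * g) < 1
    rw [hα.map_mul]
    exact (mul_le_of_le_one_left' (hle c)).trans_lt hg

theorem mem_ltOneIdeal (hα : IsMultSeminorm α) (hle : ∀ g, α g ≤ 1) {g : A} :
    g ∈ hα.ltOneIdeal hle ↔ α g < 1 :=
  Iff.rfl

theorem ltOneIdeal_isPrime (hα : IsMultSeminorm α) (hle : ∀ g, α g ≤ 1) :
    (hα.ltOneIdeal hle).IsPrime where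
  ne_top' := (Ideal.ne_top_iff_one _).2 <| by simp [mem_ltOneIdeal, hα.map_one]
  mem_or_mem' {g h} hgh := by
    simp only [mem_ltOneIdeal, hα.map_mul] at hgh ⊢
    by_contra! hge
    rw [le_antisymm (hle g) hge.1, le_antisymm (hle h) hge.2, one_mul] at hgh
    exact hgh.false

end IsMultSeminorm

theorem mult_seminorm_on_int_classification
    (α : ℤ → ℝ≥0) (hα : IsMultSeminorm α)
    (hαb : ∀ n : ℤ, α n ≤ trivialNorm n) :
    ((∀ n : ℤ, n ≠ 0 → α n = 1) ∧ α 0 = 0) ∨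
      ∃ p : ℕ, p.Prime ∧ ∃ t : ℝ≥0, t < 1 ∧
        (∀ (a : ℕ) (m : ℤ), ¬ ((p : ℤ) ∣ m) → α ((p : ℤ) ^ a * m) = t ^ a) ∧
        α 0 = 0 := by
  have hle n : α n ≤ 1 := (hαb n).trans (trivialNorm_le_one n)
  have eq_one_of_notMem : ∀ n, n ∉ hα.ltOneIdeal hle → α n = 1 := fun n hn ↦
    le_antisymm (hle n) (not_lt.1 hn)
  rcases Ideal.isPrime_int_iff.1 (hα.ltOneIdeal_isPrime hle) with hbot | ⟨p, hp, hspan⟩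
  · refine .inl ⟨fun n hn ↦ eq_one_of_notMem n ?_, hα.map_zero⟩
    rwa [hbot, Ideal.mem_bot]
  · have hp_mem : (p : ℤ) ∈ hα.ltOneIdeal hle := hspan ▸ Ideal.mem_span_singleton_self _
    refine .inr ⟨p, hp, α p, hp_mem, fun a m hm ↦ ?_, hα.map_zero⟩
    have hm1 : α m = 1 := eq_one_of_notMem m <| by rwa [hspan, Ideal.mem_span_singleton]
    rw [hα.map_mul, hα.map_pow, hm1, mul_one]
end

section
/- Let p be a prime and R a perfect 𝔽_p-algebra. Let x ∈ W(R) and let r ∈ R be the 0-th Witt coordinate of x (so x ≡ [r] mod p). If for every positive integer n there exists y ∈ W(R) with y^{p^n} = x, then x = [r]. That is, the Teichmüller lift [r] is the unique lift of r to W(R) admitting p^n-th roots for all positive integers n. -/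
/-!
Write `y₀` for the zeroth coordinate of `y`. Since `R` is perfect, `y ≡ [y₀] mod p`, and raising a
congruence mod `p` to the `p^n`-th power makes it a congruence mod `p^(n+1)`. So if `x = y^(p^n)`,
then `x₀ = y₀^(p^n)` and `x ≡ [y₀]^(p^n) = [x₀] mod p^(n+1)`. As this holds for every `n`, and
`p^n * v` has vanishing coordinates below `n`, all coordinates of `x - [x₀]` vanish.
-/

namespace WittVector

variable {p : ℕ} [Fact p.Prime] {R : Type*} [CommRing R]

theorem eq_zero_of_forall_p_pow_dvd [CharP R p] {z : WittVector p R}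
    (h : ∀ n, (p : WittVector p R) ^ n ∣ z) : z = 0 := by
  ext i
  obtain ⟨v, rfl⟩ := h (i + 1)
  rw [mul_comm, mul_pow_charP_coeff_zero v (Nat.lt_succ_self i), zero_coeff]

variable [CharP R p] [PerfectRing R p]

theorem p_dvd_sub_teichmuller_coeff_zero (y : WittVector p R) :
    (p : WittVector p R) ∣ y - teichmuller p (y.coeff 0) := by
  rw [← Ideal.mem_span_singleton, mem_span_p_iff_coeff_zero_eq_zero]
  simpa [teichmuller_coeff_zero] using constantCoeff.map_sub y (teichmuller p (y.coeff 0))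

theorem p_pow_succ_dvd_pow_sub_teichmuller_coeff_zero (y : WittVector p R) (n : ℕ) :
    (p : WittVector p R) ^ (n + 1) ∣ y ^ p ^ n - teichmuller p ((y ^ p ^ n).coeff 0) := by
  have hcoeff : (y ^ p ^ n).coeff 0 = y.coeff 0 ^ p ^ n := constantCoeff.map_pow y (p ^ n)
  rw [hcoeff, map_pow]
  exact_mod_cast dvd_sub_pow_of_dvd_sub (p_dvd_sub_teichmuller_coeff_zero y) n

end WittVector

theorem eq_teichmuller_of_p_pow_roots_general (p : ℕ) [Fact p.Prime] {R : Type*}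
    [CommRing R] [CharP R p] [PerfectRing R p]
    (x : WittVector p R)
    (hroots : ∀ n : ℕ, 0 < n → ∃ y : WittVector p R, y ^ p ^ n = x) :
    x = WittVector.teichmuller p (x.coeff 0) := by
  refine sub_eq_zero.mp (WittVector.eq_zero_of_forall_p_pow_dvd fun n => ?_)
  obtain ⟨y, rfl⟩ := hroots (n + 1) n.succ_pos
  exact (pow_dvd_pow _ (by omega)).trans
    (WittVector.p_pow_succ_dvd_pow_sub_teichmuller_coeff_zero y (n + 1))

theorem eq_teichmuller_of_p_pow_roots (p : ℕ) [Fact p.Prime] {R : Type*}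
    [CommRing R] [CharP R p] [ExpChar R p] [PerfectRing R p]
    (x : WittVector p R)
    (hroots : ∀ n : ℕ, 0 < n → ∃ y : WittVector p R, y ^ p ^ n = x) :
    x = WittVector.teichmuller p (x.coeff 0) :=
  eq_teichmuller_of_p_pow_roots_general p x hroots
end
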